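/- Under the conditions of the saturation lemma, the maximizer z additionally satisfies z_j = λ c_j for all j ∈ {τ_{i+1},…,τ_R}, where λ = sqrt(r² − Σ_{m=1}^{i} a_{τ_m}²)/‖c_{τ_{i+1},…,τ_R}‖; in particular the unsaturated coordinates are proportional to the corresponding coordinates of c. -/

import Mathlib

/-! On the unsaturated coordinates `S = {τ m | i ≤ m}` compare `z` with `t • c`, where
`t = √(r² - Σ_{m<i} a_{τ m}²) / ‖c_S‖` is chosen so that `‖t • c_S‖ = ‖z_S‖`. The bound
`r ≤ r_{i+1}` says exactly `t ≤ a_{τ i} / c_{τ i}`, and the ordering of the ratios then gives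
`t c_j ≤ a_j` on `S`, so replacing `z_S` by `t • c_S` stays feasible. Maximality of `z` yields
`⟪z_S, t • c_S⟫ ≥ ‖t • c_S‖²`, hence `‖z_S - t • c_S‖² = 2 (‖t • c_S‖² - ⟪z_S, t • c_S⟫) ≤ 0`. -/

open Finset

theorem Finset.eqOn_of_sum_sq_eq_of_sum_sq_le_sum_mul {ι : Type*} {s : Finset ι} {u v : ι → ℝ}
    (hsq : ∑ j ∈ s, u j ^ 2 = ∑ j ∈ s, v j ^ 2)
    (hle : ∑ j ∈ s, v j ^ 2 ≤ ∑ j ∈ s, u j * v j) :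
    ∀ j ∈ s, u j = v j := by
  have hdist : ∑ j ∈ s, (u j - v j) ^ 2 = 0 := by
    have hexpand : ∑ j ∈ s, (u j - v j) ^ 2
        = ∑ j ∈ s, u j ^ 2 - 2 * ∑ j ∈ s, u j * v j + ∑ j ∈ s, v j ^ 2 := by
      simp only [sub_sq, sum_add_distrib, sum_sub_distrib, mul_sum, mul_assoc]
    exact le_antisymm (by linarith) (sum_nonneg fun j _ => sq_nonneg _)
  intro j hj
  exact sub_eq_zero.mp <| pow_eq_zero_iff two_ne_zero |>.mp <|
    (sum_eq_zero_iff_of_nonneg fun j _ => sq_nonneg _).mp hdist j hj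

theorem maximizer_eq_mul_on {ι : Type*} [Fintype ι] [DecidableEq ι] (s : Finset ι)
    {a c z : ι → ℝ} {t : ℝ} (ht : 0 ≤ t) (hc : ∀ j ∈ s, 0 ≤ c j)
    (hz_box : ∀ j, 0 ≤ z j ∧ z j ≤ a j)
    (hz_max : ∀ y : ι → ℝ, ∑ j, y j ^ 2 = ∑ j, z j ^ 2 →
      (∀ j, 0 ≤ y j ∧ y j ≤ a j) → ∑ j, c j * y j ≤ ∑ j, c j * z j)
    (hnorm : ∑ j ∈ s, (t * c j) ^ 2 = ∑ j ∈ s, z j ^ 2)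
    (hfeas : ∀ j ∈ s, t * c j ≤ a j) :
    ∀ j ∈ s, z j = t * c j := by
  set y := s.piecewise (fun j => t * c j) z
  have hy_in (j) (hj : j ∈ s) : y j = t * c j := piecewise_eq_of_mem _ _ _ hj
  have hy_out (j) (hj : j ∉ s) : y j = z j := piecewise_eq_of_notMem _ _ _ hj
  have hy_sum (f : ι → ℝ → ℝ) :
      ∑ j, f j (y j) = ∑ j ∈ s, f j (t * c j) + ∑ j ∈ sᶜ, f j (z j) := by
    rw [← sum_add_sum_compl s]
    congr 1 <;> refine sum_congr rfl fun j hj => ?_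
    · rw [hy_in j hj]
    · rw [hy_out j (mem_compl.mp hj)]
  have hy_sphere : ∑ j, y j ^ 2 = ∑ j, z j ^ 2 := by
    rw [hy_sum fun _ x => x ^ 2, hnorm, sum_add_sum_compl]
  have hy_box : ∀ j, 0 ≤ y j ∧ y j ≤ a j := by
    intro j
    by_cases hj : j ∈ s
    · rw [hy_in j hj]
      exact ⟨mul_nonneg ht (hc j hj), hfeas j hj⟩
    · rw [hy_out j hj]
      exact hz_box j
  have hcz : ∑ j ∈ s, c j * (t * c j) ≤ ∑ j ∈ s, c j * z j := by
    have := hz_max y hy_sphere hy_box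
    rwa [hy_sum fun j x => c j * x, ← sum_add_sum_compl s, add_le_add_iff_right] at this
  refine eqOn_of_sum_sq_eq_of_sum_sq_le_sum_mul hnorm.symm ?_
  calc ∑ j ∈ s, (t * c j) ^ 2 = t * ∑ j ∈ s, c j * (t * c j) := by
        rw [mul_sum]; exact sum_congr rfl fun j _ => by ring
    _ ≤ t * ∑ j ∈ s, c j * z j := mul_le_mul_of_nonneg_left hcz ht
    _ = ∑ j ∈ s, z j * (t * c j) := by
        rw [mul_sum]; exact sum_congr rfl fun j _ => by ring

theorem sqrt_div_sqrt_le_inv {x C φ : ℝ} (hC : 0 < C) (hφ : 0 ≤ φ) (h : x ≤ φ⁻¹ ^ 2 * C) :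
    √x / √C ≤ φ⁻¹ := by
  rw [div_le_iff₀ (Real.sqrt_pos.mpr hC), ← Real.sqrt_sq (inv_nonneg.mpr hφ),
    ← Real.sqrt_mul' _ hC.le]
  exact Real.sqrt_le_sqrt h

theorem mul_le_of_le_inv_of_div_le {t a c φ : ℝ} (ha : 0 < a) (hc : 0 < c) (hφ : c / a ≤ φ)
    (ht : t ≤ φ⁻¹) : t * c ≤ a :=
  (le_div_iff₀ hc).mp (ht.trans ((inv_anti₀ (div_pos hc ha) hφ).trans_eq (inv_div c a)))

theorem Finset.sum_filter_lt_add_sum_filter_le {ι α M : Type*} [LinearOrder α] [AddCommMonoid M]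
    (s : Finset ι) (g : ι → α) (k : α) (f : ι → M) :
    ∑ j ∈ s.filter (fun j => g j < k), f j + ∑ j ∈ s.filter (fun j => k ≤ g j), f j
      = ∑ j ∈ s, f j := by
  simp_rw [← not_lt]
  exact sum_filter_add_sum_filter_not s _ f

namespace Fin

variable {R : ℕ} {M : Type*} [AddCommMonoid M]

theorem sum_filter_le_eq_add (f : Fin R → M) (k : Fin R) :
    ∑ m ∈ univ.filter (fun m : Fin R => (k : ℕ) ≤ m), f m
      = f k + ∑ m ∈ univ.filter (fun m : Fin R => (k : ℕ) + 1 ≤ m), f m := by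
  rw [← sum_insert (by simp)]
  congr 1
  ext m
  simp only [mem_insert, mem_filter, mem_univ, true_and, Fin.ext_iff]
  omega

theorem sum_filter_lt_succ_eq_add (f : Fin R → M) (k : Fin R) :
    ∑ m ∈ univ.filter (fun m : Fin R => (m : ℕ) < k + 1), f m
      = f k + ∑ m ∈ univ.filter (fun m : Fin R => (m : ℕ) < k), f m := by
  rw [← sum_insert (by simp)]
  congr 1
  ext m
  simp only [mem_insert, mem_filter, mem_univ, true_and, Fin.ext_iff]
  omega

theorem inv_div_sq_mul_sum_add_sum_succ (f g : Fin R → ℝ) (k : Fin R) (hf : f k ≠ 0) :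
    (f k / g k)⁻¹ ^ 2 * ∑ m ∈ univ.filter (fun m : Fin R => (k : ℕ) + 1 ≤ m), f m ^ 2
        + ∑ m ∈ univ.filter (fun m : Fin R => (m : ℕ) < k + 1), g m ^ 2
      = (f k / g k)⁻¹ ^ 2 * ∑ m ∈ univ.filter (fun m : Fin R => (k : ℕ) ≤ m), f m ^ 2
        + ∑ m ∈ univ.filter (fun m : Fin R => (m : ℕ) < k), g m ^ 2 := by
  rw [sum_filter_le_eq_add, sum_filter_lt_succ_eq_add]
  field_simp
  ring

end Fin

/-- Under the conditions of the saturation lemma, the maximizer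
`z` additionally satisfies `z_j = λ c_j` on the unsaturated indices
`j ∈ {τ_{i+1},…,τ_R}`, where
`λ = sqrt(r² − Σ_{m=1}^{i} a_{τ_m}²)/‖c_{τ_{i+1},…,τ_R}‖`
(0-based: `z (τ m) = λ * c (τ m)` for `i ≤ m`). -/
theorem stmt_4 (R : ℕ) (hR : 1 ≤ R) (a c : Fin R → ℝ)
    (ha : ∀ j, 0 < a j) (hc : ∀ j, 0 < c j) (τ : Equiv.Perm (Fin R))
    (hord : ∀ i j : Fin R, i ≤ j → c (τ j) / a (τ j) ≤ c (τ i) / a (τ i))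
    (rseq : ℕ → ℝ)
    (hri : ∀ i, 1 ≤ i → (hiR : i ≤ R) → rseq i =
      Real.sqrt ((c (τ ⟨i - 1, by omega⟩) / a (τ ⟨i - 1, by omega⟩))⁻¹ ^ 2 *
          (∑ m ∈ Finset.univ.filter (fun m : Fin R => i ≤ (m : ℕ)), (c (τ m)) ^ 2) +
        ∑ m ∈ Finset.univ.filter (fun m : Fin R => (m : ℕ) < i), (a (τ m)) ^ 2))
    (i : ℕ) (hi1 : 1 ≤ i) (hi : i ≤ R - 1) (r : ℝ)
    (hrlo : rseq i ≤ r) (hrhi : r ≤ rseq (i + 1))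
    (z : Fin R → ℝ)
    (hz_sphere : ∑ j, (z j) ^ 2 = r ^ 2)
    (hz_box : ∀ j, 0 ≤ z j ∧ z j ≤ a j)
    (hz_max : ∀ y : Fin R → ℝ, (∑ j, (y j) ^ 2 = r ^ 2) →
      (∀ j, 0 ≤ y j ∧ y j ≤ a j) → ∑ j, c j * y j ≤ ∑ j, c j * z j)
    (hsat : ∀ m : Fin R, (m : ℕ) < i → z (τ m) = a (τ m)) :
    ∀ m : Fin R, i ≤ (m : ℕ) → z (τ m) =
      (Real.sqrt (r ^ 2 - ∑ m ∈ Finset.univ.filter (fun m : Fin R => (m : ℕ) < i), (a (τ m)) ^ 2) /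
        Real.sqrt (∑ m ∈ Finset.univ.filter (fun m : Fin R => i ≤ (m : ℕ)), (c (τ m)) ^ 2)) *
      c (τ m) := by
  set k : Fin R := ⟨i, by omega⟩
  set A := ∑ m ∈ univ.filter (fun m : Fin R => (m : ℕ) < i), a (τ m) ^ 2
  set S := univ.filter (fun m : Fin R => i ≤ (m : ℕ))
  set C := ∑ m ∈ S, c (τ m) ^ 2
  set t := √(r ^ 2 - A) / √C
  have hC : 0 < C := sum_pos (fun m _ => pow_pos (hc _) 2) ⟨k, by simp [S, k]⟩
  have hzS : ∑ m ∈ S, z (τ m) ^ 2 = r ^ 2 - A := by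
    have hzT : ∑ m ∈ univ.filter (fun m : Fin R => (m : ℕ) < i), z (τ m) ^ 2 = A :=
      sum_congr rfl fun m hm => by rw [hsat m (mem_filter.mp hm).2]
    rw [← hz_sphere, ← Equiv.sum_comp τ, ← sum_filter_lt_add_sum_filter_le univ Fin.val i, hzT,
      add_sub_cancel_left]
  have ht_sq : t ^ 2 * C = r ^ 2 - A := by
    rw [div_pow, Real.sq_sqrt (hzS ▸ sum_nonneg fun _ _ => sq_nonneg _), Real.sq_sqrt hC.le,
      div_mul_cancel₀ _ hC.ne']
  have hr : 0 ≤ r := (hri i hi1 (by omega) ▸ Real.sqrt_nonneg _).trans hrlo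
  have hbound : r ^ 2 - A ≤ (c (τ k) / a (τ k))⁻¹ ^ 2 * C := by
    have h := hri (i + 1) (by omega) (by omega)
    simp only [Nat.add_sub_cancel] at h
    rw [Fin.inv_div_sq_mul_sum_add_sum_succ (fun m => c (τ m)) (fun m => a (τ m)) k (hc _).ne'] at h
    have := pow_le_pow_left₀ hr hrhi 2
    rw [h, Real.sq_sqrt (by positivity)] at this
    linarith
  have ht : t ≤ (c (τ k) / a (τ k))⁻¹ :=
    sqrt_div_sqrt_le_inv hC (div_pos (hc _) (ha _)).le hbound
  intro m hm
  refine maximizer_eq_mul_on (S.map τ.toEmbedding) (by positivity) (fun j _ => (hc j).le) hz_box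
    (fun y hy => hz_max y (hy.trans hz_sphere)) ?_ ?_ (τ m)
    (mem_map_of_mem _ (mem_filter.mpr ⟨mem_univ m, hm⟩))
  · simp only [sum_map, Equiv.coe_toEmbedding, mul_pow]
    rw [← mul_sum, ht_sq, hzS]
  · simp only [forall_mem_map, Equiv.coe_toEmbedding]
    exact fun m hm => mul_le_of_le_inv_of_div_le (ha _) (hc _) (hord k m (mem_filter.mp hm).2) ht
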